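/- Define the operator ∂⁻¹ on continuous functions f : [0,2π] → ℝ by (∂⁻¹f)(x) := ½(∫₀^x f(s) ds − ∫_x^{2π} f(s) ds). Then for every continuous function w : [0,2π] → ℝ, the operator A f := ∂⁻¹(w·f) + w·(∂⁻¹f) is skew-adjoint with respect to the L² pairing: for all continuous f, g : [0,2π] → ℝ, ∫₀^{2π} (∂⁻¹(w f) + w·∂⁻¹f)·g dx = −∫₀^{2π} f·(∂⁻¹(w g) + w·∂⁻¹g) dx. With w = u_{xx} this is the skew-symmetry (co-implecticity) of the second structure operator η₋₁⁻¹ = ∂⁻¹u_{xx} + u_{xx}∂⁻¹ of the Whitham-type dynamical system. -/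

import Mathlib

open Real intervalIntegral

/-- The inverse derivative operator
`(∂⁻¹f)(x) := ½(∫₀^x f(s) ds − ∫ₓ^{2π} f(s) ds)`. -/
noncomputable def invDeriv (f : ℝ → ℝ) : ℝ → ℝ :=
  fun x => (1 / 2) * ((∫ s in (0 : ℝ)..x, f s) - ∫ s in x..(2 * π), f s)

/-!
`∂⁻¹h` is an antiderivative of `h` with opposite endpoint values, `∂⁻¹h(2π) = −∂⁻¹h(0)`.
So integrating `∫ ∂⁻¹h · (∂⁻¹g)′` by parts, the boundary term `∂⁻¹h · ∂⁻¹g |₀^{2π}` vanishes,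
and `∂⁻¹` is skew-adjoint: `∫ ∂⁻¹h · g = −∫ h · ∂⁻¹g`. Multiplication by `w` is self-adjoint,
so `∂⁻¹ ∘ w` and `w ∘ ∂⁻¹` are each minus the adjoint of the other, and their sum is
skew-adjoint.
-/

open Set MeasureTheory

theorem invDeriv_two_pi (h : ℝ → ℝ) : invDeriv h (2 * π) = -invDeriv h 0 := by
  simp only [invDeriv, integral_same]
  ring

theorem continuousOn_invDeriv {h : ℝ → ℝ} (hh : IntegrableOn h (Icc 0 (2 * π))) :
    ContinuousOn (invDeriv h) (Icc 0 (2 * π)) := by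
  rw [← uIcc_of_le two_pi_pos.le] at hh ⊢
  exact continuousOn_const.mul
    ((continuousOn_primitive_interval hh).sub (continuousOn_primitive_interval_left hh))

theorem hasDerivAt_invDeriv {h : ℝ → ℝ} {x : ℝ} (hh : ContinuousOn h (Icc 0 (2 * π)))
    (hx : x ∈ Ioo 0 (2 * π)) : HasDerivAt (invDeriv h) (h x) x := by
  have hint : IntervalIntegrable h volume 0 (2 * π) := hh.intervalIntegrable_of_Icc two_pi_pos.le
  have hmeas : StronglyMeasurableAtFilter h (nhds x) :=
    (hh.mono Ioo_subset_Icc_self).stronglyMeasurableAtFilter isOpen_Ioo x hx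
  have hcont : ContinuousAt h x := hh.continuousAt (Icc_mem_nhds hx.1 hx.2)
  have hx' : x ∈ uIcc 0 (2 * π) := uIcc_of_le two_pi_pos.le ▸ Ioo_subset_Icc_self hx
  have hleft := integral_hasDerivAt_right (hint.mono_set (uIcc_subset_uIcc_left hx')) hmeas hcont
  have hright := integral_hasDerivAt_left (hint.mono_set (uIcc_subset_uIcc_right hx')) hmeas hcont
  rw [show h x = 1 / 2 * (h x - -h x) by ring]
  exact (hleft.sub hright).const_mul (1 / 2 : ℝ)

theorem integral_invDeriv_mul {h g : ℝ → ℝ} (hh : ContinuousOn h (Icc 0 (2 * π)))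
    (hg : ContinuousOn g (Icc 0 (2 * π))) :
    ∫ x in (0 : ℝ)..(2 * π), invDeriv h x * g x = -∫ x in (0 : ℝ)..(2 * π), h x * invDeriv g x := by
  have h2π : (0 : ℝ) ≤ 2 * π := two_pi_pos.le
  have hIcc : uIcc 0 (2 * π) = Icc 0 (2 * π) := uIcc_of_le h2π
  have hIoo : Ioo (min 0 (2 * π)) (max 0 (2 * π)) = Ioo 0 (2 * π) := by
    rw [min_eq_left h2π, max_eq_right h2π]
  rw [integral_mul_deriv_eq_deriv_mul_of_hasDerivAt
      (hIcc ▸ continuousOn_invDeriv hh.integrableOn_Icc)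
      (hIcc ▸ continuousOn_invDeriv hg.integrableOn_Icc)
      (hIoo ▸ fun x hx => hasDerivAt_invDeriv hh hx) (hIoo ▸ fun x hx => hasDerivAt_invDeriv hg hx)
      (hh.intervalIntegrable_of_Icc h2π) (hg.intervalIntegrable_of_Icc h2π),
    invDeriv_two_pi, invDeriv_two_pi]
  ring

/-- For every continuous `w : [0,2π] → ℝ`, the operator
`A f := ∂⁻¹(w·f) + w·(∂⁻¹f)` is skew-adjoint with respect to the `L²` pairing:
for all continuous `f, g : [0,2π] → ℝ`,
`∫₀^{2π} (∂⁻¹(wf) + w ∂⁻¹f)·g dx = −∫₀^{2π} f·(∂⁻¹(wg) + w ∂⁻¹g) dx`.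
With `w = u_{xx}` this is the skew-symmetry (co-implecticity) of the second
structure operator `η₋₁⁻¹ = ∂⁻¹u_{xx} + u_{xx}∂⁻¹`. -/
theorem secondStructure_skew_adjoint
    (w f g : ℝ → ℝ)
    (hw : ContinuousOn w (Set.Icc 0 (2 * π)))
    (hf : ContinuousOn f (Set.Icc 0 (2 * π)))
    (hg : ContinuousOn g (Set.Icc 0 (2 * π))) :
    ∫ x in (0 : ℝ)..(2 * π),
        (invDeriv (fun s => w s * f s) x + w x * invDeriv f x) * g x
      = - ∫ x in (0 : ℝ)..(2 * π),
        f x * (invDeriv (fun s => w s * g s) x + w x * invDeriv g x) := by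
  have hwf : ContinuousOn (fun s => w s * f s) (Icc 0 (2 * π)) := hw.mul hf
  have hwg : ContinuousOn (fun s => w s * g s) (Icc 0 (2 * π)) := hw.mul hg
  have hDf := continuousOn_invDeriv hf.integrableOn_Icc
  have hDg := continuousOn_invDeriv hg.integrableOn_Icc
  have hDwf := continuousOn_invDeriv hwf.integrableOn_Icc
  have hDwg := continuousOn_invDeriv hwg.integrableOn_Icc
  have hint {φ : ℝ → ℝ} (hφ : ContinuousOn φ (Icc 0 (2 * π))) :
      IntervalIntegrable φ volume 0 (2 * π) := hφ.intervalIntegrable_of_Icc two_pi_pos.le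
  calc _ = ∫ x in (0 : ℝ)..(2 * π),
          invDeriv (fun s => w s * f s) x * g x + invDeriv f x * (w x * g x) := by
        congr 1; ext x; ring
    _ = -∫ x in (0 : ℝ)..(2 * π),
          w x * f x * invDeriv g x + f x * invDeriv (fun s => w s * g s) x := by
        rw [integral_add (hint (by fun_prop)) (hint (by fun_prop)),
          integral_add (hint (by fun_prop)) (hint (by fun_prop)),
          integral_invDeriv_mul hwf hg, integral_invDeriv_mul hf hwg]
        ring
    _ = _ := by congr 2; ext x; ring
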